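/- Let n ≥ 1 be an integer, let S_n = ℂ[x,y]/(xⁿ − yⁿ), and let μ : S_n → S_n denote multiplication by the class of x − y. Then both the kernel of μ and the cokernel of μ are free modules of rank n over the subring ℂ[xⁿ] of S_n generated by the class of xⁿ. -/

import Mathlib

open MvPolynomial

/-- The principal ideal `(xⁿ - yⁿ)` in `ℂ[x,y]`. -/
noncomputable abbrev snIdeal (n : ℕ) : Ideal (MvPolynomial (Fin 2) ℂ) :=
  Ideal.span {X 0 ^ n - X 1 ^ n}

/-- Multiplication by the class of `x - y` on `S_n = ℂ[x,y]/(xⁿ - yⁿ)`, as an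
`S_n`-linear endomorphism. -/
noncomputable abbrev mulXsubY (n : ℕ) :
    (MvPolynomial (Fin 2) ℂ ⧸ snIdeal n) →ₗ[MvPolynomial (Fin 2) ℂ ⧸ snIdeal n]
      (MvPolynomial (Fin 2) ℂ ⧸ snIdeal n) :=
  LinearMap.mulLeft (MvPolynomial (Fin 2) ℂ ⧸ snIdeal n)
    (Ideal.Quotient.mk (snIdeal n) (X 0 - X 1))

/-- The subring `ℂ[xⁿ]` of `S_n = ℂ[x,y]/(xⁿ - yⁿ)` generated (as a `ℂ`-subalgebra)
by the class of `xⁿ`. -/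
noncomputable abbrev cxn (n : ℕ) : Subalgebra ℂ (MvPolynomial (Fin 2) ℂ ⧸ snIdeal n) :=
  Algebra.adjoin ℂ {Ideal.Quotient.mk (snIdeal n) (X 0 ^ n)}

/-!
Write `S = ℂ[x,y]/(xⁿ - yⁿ)` and `xⁿ - yⁿ = (x - y) g`. As `ℂ[x,y]` is a domain, the kernel of
multiplication by `x - y` on `S` is `gS` and the kernel of multiplication by `g` is `(x - y)S`,
so multiplication by `g` maps the cokernel `S/(x - y)S` isomorphically onto the kernel.
The cokernel is `ℂ[x,y]/(x - y) ≅ ℂ[x]`, and over `ℂ[xⁿ]` it has the basis `1, x, …, xⁿ⁻¹`: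
these span because `xᵏ = (xⁿ)^(k / n) x^(k % n)`, and they are independent because restricting
to the diagonal `x = y` sends `∑ cᵢ(xⁿ) xⁱ` to a polynomial whose coefficients in degrees
`≡ i (mod n)` are those of `cᵢ`.
-/

namespace Polynomial

variable {R : Type*} [CommSemiring R]

theorem coeff_sum_expand_mul_X_pow {n : ℕ} (hn : 0 < n) (q : Fin n → R[X]) (i : Fin n)
    (k : ℕ) : (∑ j : Fin n, expand R n (q j) * X ^ (j : ℕ)).coeff (k * n + i) = (q i).coeff k := by
  rw [finsetSum_coeff, Finset.sum_eq_single i]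
  · rw [coeff_mul_X_pow, coeff_expand_mul hn]
  · intro j _ hji
    rw [coeff_mul_X_pow', coeff_expand hn]
    split_ifs with hle hdvd
    · obtain ⟨e, he⟩ := hdvd
      have hmod := congrArg (· % n) (Nat.sub_eq_iff_eq_add hle |>.mp he)
      simp only [Nat.mul_add_mod_of_lt i.2, Nat.mul_add_mod, Nat.mod_eq_of_lt j.2] at hmod
      exact absurd (Fin.ext hmod.symm) hji
    · rfl
    · rfl
  · simp

theorem eq_zero_of_sum_expand_mul_X_pow_eq_zero {n : ℕ} (hn : 0 < n) {q : Fin n → R[X]}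
    (h : ∑ j : Fin n, expand R n (q j) * X ^ (j : ℕ) = 0) (i : Fin n) : q i = 0 :=
  ext fun k => by simpa [h] using (coeff_sum_expand_mul_X_pow hn q i k).symm

end Polynomial

open LinearMap

noncomputable def quotRangeMulLeftEquivKer {S : Type*} [CommRing S] {d g : S}
    (hd : ker (mulLeft S d) = range (mulLeft S g))
    (hg : ker (mulLeft S g) = range (mulLeft S d)) :
    (S ⧸ range (mulLeft S d)) ≃ₗ[S] ker (mulLeft S d) :=
  (Submodule.quotEquivOfEq _ _ hg.symm).trans
    ((mulLeft S g).quotKerEquivRange.trans (LinearEquiv.ofEq _ _ hd.symm))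

theorem ker_mulLeft_mk_eq_range_mulLeft_mk {R : Type*} [CommRing R] [IsDomain R] {d g f : R}
    (hf : d * g = f) (hd : d ≠ 0) :
    ker (mulLeft (R ⧸ Ideal.span {f}) (Ideal.Quotient.mk (Ideal.span {f}) d)) =
      range (mulLeft (R ⧸ Ideal.span {f}) (Ideal.Quotient.mk (Ideal.span {f}) g)) := by
  subst hf
  refine le_antisymm (fun x hx => ?_) ?_
  · obtain ⟨p, rfl⟩ := Ideal.Quotient.mk_surjective x
    rw [mem_ker, mulLeft_apply, ← map_mul, Ideal.Quotient.eq_zero_iff_mem,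
      Ideal.mem_span_singleton, mul_dvd_mul_iff_left hd] at hx
    obtain ⟨r, rfl⟩ := hx
    exact ⟨Ideal.Quotient.mk _ r, by rw [mulLeft_apply, map_mul]⟩
  · rintro _ ⟨y, rfl⟩
    rw [mem_ker, mulLeft_apply, mulLeft_apply, ← mul_assoc, ← map_mul,
      Ideal.Quotient.eq_zero_iff_mem.mpr (Ideal.mem_span_singleton_self _), zero_mul]

section PowBasis

open Polynomial

variable {K S : Type*} [CommRing K] [CommRing S] [Algebra K S] {N : Submodule S S} {t u : S}
  {n : ℕ}

theorem linearIndependent_mkQ_pow (hn : 0 < n) (φ : S →ₐ[K] K[X]) (ht : φ t = Polynomial.X)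
    (hu : φ u = Polynomial.X ^ n) (hN : ∀ s ∈ N, φ s = 0) :
    LinearIndependent (Algebra.adjoin K {u}) fun i : Fin n => N.mkQ (t ^ (i : ℕ)) := by
  rw [Fintype.linearIndependent_iff]
  intro c hc i
  have hc_mem : ∀ j, ∃ P : K[X], aeval u P = c j := fun j => by
    rw [← AlgHom.mem_range, ← Algebra.adjoin_singleton_eq_range_aeval]; exact (c j).2
  choose P hP using hc_mem
  have hφc : ∀ j, φ (c j) = expand K n (P j) := fun j => by
    rw [← hP j, ← aeval_algHom_apply, hu, expand_eq_comp_X_pow, comp_eq_aeval]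
  have hsum : ∑ j, c j • t ^ (j : ℕ) ∈ N := by
    rw [← Submodule.Quotient.mk_eq_zero, ← Submodule.mkQ_apply, map_sum]
    simpa only [Submodule.mkQ_apply, Submodule.Quotient.mk_smul] using hc
  have hφsum := hN _ hsum
  simp only [map_sum, Subalgebra.smul_def, smul_eq_mul, map_mul, map_pow, ht, hφc] at hφsum
  ext
  rw [← hP i, eq_zero_of_sum_expand_mul_X_pow_eq_zero hn hφsum i, map_zero,
    ZeroMemClass.coe_zero]

theorem span_mkQ_pow_eq_top (hn : 0 < n) (htu : t ^ n = u)
    (hN : ∀ s, ∃ q : K[X], s - aeval t q ∈ N) :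
    Submodule.span (Algebra.adjoin K {u}) (Set.range fun i : Fin n => N.mkQ (t ^ (i : ℕ))) =
      ⊤ := by
  subst htu
  refine Submodule.eq_top_iff'.mpr fun m => ?_
  obtain ⟨s, rfl⟩ := N.mkQ_surjective m
  obtain ⟨q, hq⟩ := hN s
  rw [Submodule.mkQ_apply, (Submodule.Quotient.eq N).mpr hq]
  clear hq
  induction q using Polynomial.induction_on' with
  | add p q hp hq => rw [map_add, Submodule.Quotient.mk_add]; exact add_mem hp hq
  | monomial k a =>
    let v : Algebra.adjoin K {t ^ n} := ⟨t ^ n, Algebra.self_mem_adjoin_singleton K _⟩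
    have hk : aeval t (monomial k a) = (algebraMap K _ a * v ^ (k / n)) • t ^ (k % n) := by
      rw [Polynomial.aeval_monomial, Subalgebra.smul_def, smul_eq_mul, Subalgebra.coe_mul,
        Subalgebra.coe_pow, Subalgebra.coe_algebraMap, mul_assoc, ← pow_mul, ← pow_add,
        Nat.div_add_mod]
    rw [hk, Submodule.Quotient.mk_smul]
    exact Submodule.smul_mem _ _ (Submodule.subset_span ⟨⟨k % n, Nat.mod_lt k hn⟩, rfl⟩)

end PowBasis

noncomputable def restrictDiagonal (n : ℕ) :
    (MvPolynomial (Fin 2) ℂ ⧸ snIdeal n) →ₐ[ℂ] Polynomial ℂ :=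
  Ideal.Quotient.liftₐ (snIdeal n) (aeval fun _ => Polynomial.X) fun a ha => by
    obtain ⟨b, rfl⟩ := Ideal.mem_span_singleton'.mp ha
    simp

@[simp]
theorem restrictDiagonal_mk (n : ℕ) (p : MvPolynomial (Fin 2) ℂ) :
    restrictDiagonal n (Ideal.Quotient.mk (snIdeal n) p) = aeval (fun _ => Polynomial.X) p :=
  rfl

theorem restrictDiagonal_eq_zero_of_mem_range {n : ℕ} {s : MvPolynomial (Fin 2) ℂ ⧸ snIdeal n}
    (hs : s ∈ range (mulXsubY n)) : restrictDiagonal n s = 0 := by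
  obtain ⟨r, rfl⟩ := hs
  simp

theorem sub_aeval_restrictDiagonal_mem_range (n : ℕ) (s : MvPolynomial (Fin 2) ℂ ⧸ snIdeal n) :
    s - Polynomial.aeval (Ideal.Quotient.mk (snIdeal n) (X 0)) (restrictDiagonal n s) ∈
      range (mulXsubY n) := by
  obtain ⟨p, rfl⟩ := Ideal.Quotient.mk_surjective s
  set J : Ideal (MvPolynomial (Fin 2) ℂ ⧸ snIdeal n) := range (mulXsubY n)
  have hxy : Ideal.Quotient.mk (snIdeal n) (X 0) - Ideal.Quotient.mk (snIdeal n) (X 1) ∈ J :=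
    ⟨1, by simp⟩
  have hcomp : (Ideal.Quotient.mkₐ ℂ J).comp (Ideal.Quotient.mkₐ ℂ (snIdeal n)) =
      (Polynomial.aeval (Ideal.Quotient.mk J (Ideal.Quotient.mk (snIdeal n) (X 0)))).comp
        (aeval fun _ => Polynomial.X) := by
    ext i
    fin_cases i
    · simp
    · simpa using (Ideal.Quotient.eq.mpr hxy).symm
  rw [← Ideal.Quotient.eq, restrictDiagonal_mk, ← Ideal.Quotient.mkₐ_eq_mk ℂ,
    ← Polynomial.aeval_algHom_apply]
  exact DFunLike.congr_fun hcomp p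

theorem exists_ker_mulXsubY_eq_range (n : ℕ) (hn : 0 < n) :
    ∃ g : MvPolynomial (Fin 2) ℂ,
      ker (mulXsubY n) = range (mulLeft _ (Ideal.Quotient.mk (snIdeal n) g)) ∧
      ker (mulLeft _ (Ideal.Quotient.mk (snIdeal n) g)) = range (mulXsubY n) := by
  obtain ⟨g, hg⟩ := sub_dvd_pow_sub_pow (X 0 : MvPolynomial (Fin 2) ℂ) (X 1) n
  have hne : (X 0 ^ n - X 1 ^ n : MvPolynomial (Fin 2) ℂ) ≠ 0 := fun h => by
    simpa [hn.ne'] using congrArg (eval ![1, 0]) h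
  rw [hg] at hne
  exact ⟨g, ker_mulLeft_mk_eq_range_mulLeft_mk hg.symm (left_ne_zero_of_mul hne),
    ker_mulLeft_mk_eq_range_mulLeft_mk (hg.trans (mul_comm _ _)).symm (right_ne_zero_of_mul hne)⟩

noncomputable def basisQuotRangeMulXsubY (n : ℕ) (hn : 0 < n) :
    Module.Basis (Fin n) (cxn n)
      ((MvPolynomial (Fin 2) ℂ ⧸ snIdeal n) ⧸ range (mulXsubY n)) :=
  Module.Basis.mk
    (linearIndependent_mkQ_pow hn (restrictDiagonal n) (by simp) (by simp)
      fun _ => restrictDiagonal_eq_zero_of_mem_range)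
    (span_mkQ_pow_eq_top hn (map_pow _ _ _).symm
      fun s => ⟨_, sub_aeval_restrictDiagonal_mem_range n s⟩).ge

/-- For `n ≥ 1` and `μ` multiplication by the class of `x - y` on
`S_n = ℂ[x,y]/(xⁿ - yⁿ)`, both the kernel and the cokernel of `μ` are free modules of
rank `n` over the subring `ℂ[xⁿ]` of `S_n` generated by the class of `xⁿ`. -/
theorem equivariant_ker_coker_free (n : ℕ) (hn : 1 ≤ n) :
    Nonempty (Module.Basis (Fin n) ↥(cxn n) ↥(LinearMap.ker (mulXsubY n))) ∧
    Nonempty (Module.Basis (Fin n) ↥(cxn n)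
      ((MvPolynomial (Fin 2) ℂ ⧸ snIdeal n) ⧸ LinearMap.range (mulXsubY n))) := by
  obtain ⟨g, hker, hker'⟩ := exists_ker_mulXsubY_eq_range n hn
  let b := basisQuotRangeMulXsubY n hn
  exact ⟨⟨b.map ((quotRangeMulLeftEquivKer hker hker').restrictScalars (cxn n))⟩, ⟨b⟩⟩
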